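/- If gcd(p,q) = d > 1, then T^α_{pq} decomposes as a direct sum of simple right A-modules: T^α_{pq} ≅ ⊕_{l=0}^{d−1} T^{(α+λl)/d}_{p/d, q/d}. -/

import Mathlib

/-- The right action of the generator `a_{10}` on the module `T^α_{pq}`. -/
noncomputable def Uop (lam α : ℝ) (p q : ℤ) : (ℤ →₀ ℂ) →ₗ[ℂ] (ℤ →₀ ℂ) :=
  Finsupp.lsum ℂ fun n => LinearMap.toSpanSingleton ℂ (ℤ →₀ ℂ)
    (Finsupp.single (n + q)
      (if p = 0 then 1 else
        Complex.exp (Complex.I *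
          ((α + lam * n + lam * q * ((p : ℝ) + 1) / 2) / (p : ℝ)))))

/-- The right action of the generator `a_{01}` on the module `T^α_{pq}`. -/
noncomputable def Vop (lam α : ℝ) (p q : ℤ) : (ℤ →₀ ℂ) →ₗ[ℂ] (ℤ →₀ ℂ) :=
  Finsupp.lsum ℂ fun n => LinearMap.toSpanSingleton ℂ (ℤ →₀ ℂ)
    (if p = 0 then Finsupp.single n (Complex.exp (Complex.I * ((α + lam * n) / (q : ℝ))))
     else Finsupp.single (n - p) 1)


noncomputable def wop (σ : ℤ → ℤ) (w : ℤ → ℂ) : (ℤ →₀ ℂ) →ₗ[ℂ] (ℤ →₀ ℂ) :=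
  Finsupp.lsum ℂ fun n => LinearMap.toSpanSingleton ℂ (ℤ →₀ ℂ) (Finsupp.single (σ n) (w n))

lemma wop_single (σ : ℤ → ℤ) (w : ℤ → ℂ) (n : ℤ) (a : ℂ) :
    wop σ w (Finsupp.single n a) = Finsupp.single (σ n) (a * w n) := by
  rw [wop, Finsupp.lsum_single, LinearMap.toSpanSingleton_apply, Finsupp.smul_single,
    smul_eq_mul]

lemma Uop_eq (lam α : ℝ) (p q : ℤ) :
    Uop lam α p q = wop (fun n => n + q)
      (fun n => if p = 0 then 1 else
        Complex.exp (Complex.I * ((α + lam * n + lam * q * ((p : ℝ) + 1) / 2) / (p : ℝ)))) := rfl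

lemma Vop_eq_zero (lam α : ℝ) (q : ℤ) :
    Vop lam α 0 q = wop (fun n => n)
      (fun n => Complex.exp (Complex.I * ((α + lam * n) / (q : ℝ)))) := by
  unfold Vop wop; norm_num

lemma Vop_eq (lam α : ℝ) {p : ℤ} (q : ℤ) (hp : p ≠ 0) :
    Vop lam α p q = wop (fun n => n - p) (fun _ => 1) := by
  unfold Vop wop; simp only [if_neg hp]

lemma wop_comp (σ τ : ℤ → ℤ) (w v : ℤ → ℂ) :
    (wop σ w) ∘ₗ (wop τ v) = wop (fun n => σ (τ n)) (fun n => v n * w (τ n)) := by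
  apply Finsupp.lhom_ext
  intro n b
  rw [LinearMap.comp_apply, wop_single, wop_single, wop_single, mul_assoc]

lemma wop_id : wop (fun n => n) (fun _ => 1) = LinearMap.id := by
  apply Finsupp.lhom_ext; intro n b; rw [wop_single, mul_one, LinearMap.id_apply]

lemma map_eq_of_comp_id {f g : (ℤ →₀ ℂ) →ₗ[ℂ] (ℤ →₀ ℂ)} (hgf : g ∘ₗ f = LinearMap.id)
    (W : Submodule ℂ (ℤ →₀ ℂ)) (hf : Submodule.map f W = W) : Submodule.map g W = W := by
  conv_lhs => rw [← hf]
  rw [← Submodule.map_comp, hgf, Submodule.map_id]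

lemma map_pow' {f : (ℤ →₀ ℂ) →ₗ[ℂ] (ℤ →₀ ℂ)} (W : Submodule ℂ (ℤ →₀ ℂ))
    (hf : Submodule.map f W = W) (k : ℕ) : Submodule.map (f ^ k) W = W := by
  induction k with
  | zero => rw [pow_zero, Module.End.one_eq_id, Submodule.map_id]
  | succ k ih =>
    rw [pow_succ, Module.End.mul_eq_comp, Submodule.map_comp, hf, ih]

lemma map_comp_eq {f g : (ℤ →₀ ℂ) →ₗ[ℂ] (ℤ →₀ ℂ)} (W : Submodule ℂ (ℤ →₀ ℂ))
    (hf : Submodule.map f W = W) (hg : Submodule.map g W = W) :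
    Submodule.map (f ∘ₗ g) W = W := by
  rw [Submodule.map_comp, hg, hf]

lemma exp_I_eq {x y : ℝ} (h : Complex.exp (Complex.I * x) = Complex.exp (Complex.I * y)) :
    ∃ k : ℤ, x = y + 2 * Real.pi * k := by
  rw [Complex.exp_eq_exp_iff_exists_int] at h
  obtain ⟨k, hk⟩ := h
  refine ⟨k, ?_⟩
  have h2 : (Complex.I) * ((x : ℂ) - y - 2 * Real.pi * k) = 0 := by
    push_cast
    linear_combination hk
  rcases mul_eq_zero.mp h2 with h | h
  · exact absurd h Complex.I_ne_zero
  · have h3 : (x : ℂ) = (y : ℂ) + 2 * Real.pi * k := by linear_combination h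
    exact_mod_cast h3

set_option linter.unusedTactic false in
set_option linter.unnecessarySimpa false in
lemma lam_mul_ne (lam : ℝ) (hlam : Irrational (lam / (2 * Real.pi))) {k : ℤ} (hk : k ≠ 0)
    (j : ℤ) : lam * k ≠ 2 * Real.pi * j := by
  intro h
  have hπ : (2 : ℝ) * Real.pi ≠ 0 := by positivity
  have hk' : (k : ℝ) ≠ 0 := Int.cast_ne_zero.mpr hk
  apply hlam
  refine ⟨(j : ℚ) / (k : ℚ), ?_⟩
  rw [Rat.cast_div, Rat.cast_intCast, Rat.cast_intCast, div_eq_div_iff hk' hπ]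
  linear_combination -h

lemma diag_apply (D : (ℤ →₀ ℂ) →ₗ[ℂ] (ℤ →₀ ℂ)) (μ : ℤ → ℂ)
    (hD : ∀ n (a : ℂ), D (Finsupp.single n a) = μ n • Finsupp.single n a)
    (w : ℤ →₀ ℂ) (m : ℤ) : D w m = μ m * w m := by
  induction w using Finsupp.induction_linear with
  | zero => simp
  | add f g hf hg => rw [map_add, Finsupp.add_apply, Finsupp.add_apply, hf, hg]; ring
  | single n a =>
    rw [hD, Finsupp.smul_apply, smul_eq_mul, Finsupp.single_apply]
    rcases eq_or_ne n m with rfl | hne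
    · simp
    · simp [hne]

lemma diag_extract (D : (ℤ →₀ ℂ) →ₗ[ℂ] (ℤ →₀ ℂ)) (μ : ℤ → ℂ)
    (hD : ∀ n (a : ℂ), D (Finsupp.single n a) = μ n • Finsupp.single n a)
    (hμ : Function.Injective μ) (W : Submodule ℂ (ℤ →₀ ℂ))
    (hW : ∀ w ∈ W, D w ∈ W) :
    ∀ w ∈ W, ∀ n, Finsupp.single n (w n) ∈ W := by
  suffices H : ∀ k : ℕ, ∀ w ∈ W, w.support.card ≤ k → ∀ n, Finsupp.single n (w n) ∈ W by
    intro w hw n; exact H w.support.card w hw le_rfl n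
  intro k
  induction k with
  | zero =>
    intro w hw hc n
    have hw0 : w = 0 := by
      rwa [Nat.le_zero, Finset.card_eq_zero, Finsupp.support_eq_empty] at hc
    subst hw0
    simpa using W.zero_mem
  | succ k IH =>
    intro w hw hc n
    by_cases hn : w n = 0
    · rw [hn]; simpa using W.zero_mem
    by_cases hs : w.support ⊆ {n}
    · have hws : w = Finsupp.single n (w n) := Finsupp.support_subset_singleton.mp hs
      rw [← hws]; exact hw
    · obtain ⟨n₀, hn₀s, hn₀⟩ := Finset.not_subset.mp hs
      have hn₀n : n₀ ≠ n := by simpa using hn₀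
      have hn₀s' : w n₀ ≠ 0 := Finsupp.mem_support_iff.mp hn₀s
      set w' := D w - μ n₀ • w with hw'
      have hw'W : w' ∈ W := W.sub_mem (hW w hw) (W.smul_mem _ hw)
      have hw'apply : ∀ m, w' m = (μ m - μ n₀) * w m := by
        intro m
        rw [hw', Finsupp.sub_apply, Finsupp.smul_apply, diag_apply D μ hD, smul_eq_mul]
        ring
      have hsupp : w'.support ⊆ w.support.erase n₀ := by
        intro m hm
        rw [Finsupp.mem_support_iff, hw'apply] at hm
        rw [Finset.mem_erase, Finsupp.mem_support_iff]
        constructor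
        · intro e; subst e; apply hm; rw [sub_self, zero_mul]
        · intro e; apply hm; rw [e, mul_zero]
      have hcard : w'.support.card ≤ k := by
        have h1 : (w.support.erase n₀).card < w.support.card :=
          Finset.card_erase_lt_of_mem hn₀s
        have h2 := Finset.card_le_card hsupp
        omega
      have h1 := IH w' hw'W hcard n
      rw [hw'apply n] at h1
      have hμn : μ n - μ n₀ ≠ 0 := sub_ne_zero.mpr (fun e => hn₀n ((hμ e).symm ▸ rfl))
      have h2 := W.smul_mem ((μ n - μ n₀)⁻¹) h1
      rwa [Finsupp.smul_single, smul_eq_mul, inv_mul_cancel_left₀ hμn] at h2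
lemma arg_lin {x y c pp : ℝ} (hpp : pp ≠ 0) (h : x / pp = y / pp + c) : x = y + c * pp := by
  field_simp at h
  linarith

set_option maxHeartbeats 1000000 in
lemma diagT (lam : ℝ) (hlam : Irrational (lam / (2 * Real.pi))) (β : ℝ) (p q : ℤ)
    (hpq : Int.gcd p q = 1) (W : Submodule ℂ (ℤ →₀ ℂ))
    (hU : Submodule.map (Uop lam β p q) W = W)
    (hV : Submodule.map (Vop lam β p q) W = W) :
    ∃ (D : (ℤ →₀ ℂ) →ₗ[ℂ] (ℤ →₀ ℂ)) (μ : ℤ → ℂ),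
      (∀ w ∈ W, D w ∈ W) ∧
      (∀ n (a₀ : ℂ), D (Finsupp.single n a₀) = μ n • Finsupp.single n a₀) ∧
      Function.Injective μ := by
  set cU : ℤ → ℂ := fun n => if p = 0 then 1 else
      Complex.exp (Complex.I * ((β + lam * n + lam * q * ((p : ℝ) + 1) / 2) / (p : ℝ)))
    with hcU_def
  have hUw : Uop lam β p q = wop (fun n => n + q) cU := Uop_eq lam β p q
  rw [hUw] at hU
  have hcU : ∀ n, cU n ≠ 0 := by
    intro n; rw [hcU_def]; dsimp only
    split
    · exact one_ne_zero
    · exact Complex.exp_ne_zero _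
  by_cases hp : p = 0
  · -- p = 0 : V itself is diagonal
    subst hp
    have hq : q ≠ 0 := by
      rintro rfl; simp [Int.gcd] at hpq
    have hq' : (q : ℝ) ≠ 0 := Int.cast_ne_zero.mpr hq
    refine ⟨Vop lam β 0 q,
      fun n => Complex.exp (Complex.I * (((β + lam * n) / (q : ℝ) : ℝ) : ℂ)), ?_, ?_, ?_⟩
    · intro w hw; rw [← hV]; exact Submodule.mem_map_of_mem hw
    · intro n a₀
      rw [Vop_eq_zero, wop_single, Finsupp.smul_single, smul_eq_mul, mul_comm]
      congr 2
      push_cast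
      ring
    · intro n n' h
      by_contra hne
      obtain ⟨k, hk⟩ := exp_I_eq h
      have h2 : lam * ((n - n' : ℤ) : ℝ) = 2 * Real.pi * ((k * q : ℤ) : ℝ) := by
        push_cast
        field_simp at hk
        linear_combination hk
      exact lam_mul_ne lam hlam (sub_ne_zero.mpr hne) _ h2
  · -- p ≠ 0 : use a combination of powers of U and shifts
    have hp' : (p : ℝ) ≠ 0 := Int.cast_ne_zero.mpr hp
    have hpC : (p : ℂ) ≠ 0 := Int.cast_ne_zero.mpr hp
    set E : ℕ → ℤ → ℂ := fun k n => Complex.exp (Complex.I *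
        ((((k : ℝ) * (β + lam * q * ((p : ℝ) + 1) / 2) + lam * ((k : ℝ) * (n : ℝ))
          + lam * (q : ℝ) * ((k : ℝ) * ((k : ℝ) - 1) / 2)) / (p : ℝ) : ℝ) : ℂ)) with hE_def
    have hUpow : ∀ (k : ℕ) (n : ℤ) (a₀ : ℂ),
        ((wop (fun n => n + q) cU) ^ k) (Finsupp.single n a₀)
          = E k n • Finsupp.single (n + (k : ℤ) * q) a₀ := by
      intro k
      induction k with
      | zero =>
        intro n a₀
        rw [pow_zero, hE_def]
        norm_num
      | succ k ih =>
        intro n a₀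
        rw [pow_succ, Module.End.mul_apply, wop_single, ih]
        rw [Finsupp.smul_single, Finsupp.smul_single, smul_eq_mul, smul_eq_mul]
        have hidx : n + q + (k : ℤ) * q = n + ((k : ℕ) + 1 : ℤ) * q := by push_cast; ring
        rw [hidx]
        have hcUn : cU n = Complex.exp (Complex.I *
            ((β + lam * n + lam * q * ((p : ℝ) + 1) / 2) / (p : ℝ))) := by
          rw [hcU_def]; dsimp only; rw [if_neg hp]
        have hE : E k (n + q) * cU n = E (k + 1) n := by
          rw [hcUn, hE_def]
          dsimp only
          rw [← Complex.exp_add]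
          congr 1
          push_cast
          field_simp
          ring
        have hn : (((k:ℕ) + 1 : ℤ) : ℤ) = ((k + 1 : ℕ) : ℤ) := by push_cast; ring
        rw [show n + ((k : ℕ) + 1 : ℤ) * q = n + ((k + 1 : ℕ) : ℤ) * q by push_cast; ring]
        congr 1
        linear_combination a₀ * hE
    set t : ℤ := if 0 ≤ p * q then -p else p with ht_def
    have spow : ∀ (k : ℕ), (wop (fun n => n + t) (fun _ => (1 : ℂ))) ^ k
        = wop (fun n => n + (k : ℤ) * t) (fun _ => 1) := by
      intro k
      induction k with
      | zero =>
        rw [pow_zero,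
          show (fun n : ℤ => n + ((0 : ℕ) : ℤ) * t) = fun n : ℤ => n by funext n; push_cast; ring,
          wop_id]
        rfl
      | succ k ih =>
        rw [pow_succ, Module.End.mul_eq_comp, ih, wop_comp,
          show (fun n : ℤ => (n + t) + (k : ℤ) * t) = fun n : ℤ => n + ((k + 1 : ℕ) : ℤ) * t by
            funext n; push_cast; ring,
          show (fun n : ℤ => (1 : ℂ) * 1) = fun _ : ℤ => (1 : ℂ) by funext n; rw [one_mul]]
    have hVW : Submodule.map (wop (fun n => n - p) (fun _ => (1 : ℂ))) W = W := by
      rw [← Vop_eq lam β q hp]; exact hV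
    have hSW : Submodule.map (wop (fun n => n + t) (fun _ => (1 : ℂ))) W = W := by
      rw [ht_def]
      split_ifs with hpq0
      · rw [show (fun n : ℤ => n + -p) = fun n : ℤ => n - p by funext n; ring]
        exact hVW
      · have hVinvV : wop (fun n => n + p) (fun _ => (1 : ℂ)) ∘ₗ
            wop (fun n => n - p) (fun _ => (1 : ℂ)) = LinearMap.id := by
          rw [wop_comp,
            show (fun n : ℤ => n - p + p) = fun n : ℤ => n by funext n; ring,
            show (fun n : ℤ => (1 : ℂ) * 1) = fun _ : ℤ => (1 : ℂ) by funext n; rw [one_mul],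
            wop_id]
        exact map_eq_of_comp_id hVinvV W hVW
    have hkey : (q.natAbs : ℤ) * t + (p.natAbs : ℤ) * q = 0 := by
      rw [ht_def, Int.natCast_natAbs, Int.natCast_natAbs]
      split_ifs with hpq0
      · rcases le_or_gt 0 p with h1 | h1 <;> rcases le_or_gt 0 q with h2 | h2
        · rw [abs_of_nonneg h1, abs_of_nonneg h2]; ring
        · have hp0 : p = 0 := by nlinarith
          exact absurd hp0 hp
        · have hq0 : q = 0 := by nlinarith
          rw [hq0]; simp
        · rw [abs_of_neg h1, abs_of_neg h2]; ring
      · push_neg at hpq0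
        rcases le_or_gt 0 p with h1 | h1 <;> rcases le_or_gt 0 q with h2 | h2
        · nlinarith
        · rw [abs_of_nonneg h1, abs_of_neg h2]; ring
        · rw [abs_of_neg h1, abs_of_nonneg h2]; ring
        · nlinarith
    refine ⟨((wop (fun n => n + q) cU) ^ p.natAbs) ∘ₗ
        ((wop (fun n => n + t) (fun _ => (1 : ℂ))) ^ q.natAbs),
      fun n => E p.natAbs (n + (q.natAbs : ℤ) * t), ?_, ?_, ?_⟩
    · intro w hw
      have hDW := map_comp_eq W (map_pow' W hU p.natAbs) (map_pow' W hSW q.natAbs)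
      rw [← hDW]
      exact Submodule.mem_map_of_mem hw
    · intro n a₀
      rw [LinearMap.comp_apply, spow, wop_single, mul_one, hUpow]
      have hidx : n + (q.natAbs : ℤ) * t + (p.natAbs : ℤ) * q = n := by linarith [hkey]
      rw [hidx]
    · intro n n' h
      by_contra hne
      have ha : p.natAbs ≠ 0 := Int.natAbs_ne_zero.mpr hp
      rw [hE_def] at h
      obtain ⟨k, hk⟩ := exp_I_eq h
      have h2 : lam * (((p.natAbs : ℤ) * (n - n') : ℤ) : ℝ)
          = 2 * Real.pi * ((k * p : ℤ) : ℝ) := by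
        field_simp at hk
        push_cast [Nat.cast_natAbs] at hk ⊢
        linear_combination hk / 2
      have hne2 : ((p.natAbs : ℤ) * (n - n') : ℤ) ≠ 0 :=
        mul_ne_zero (by exact_mod_cast ha) (sub_ne_zero.mpr hne)
      exact lam_mul_ne lam hlam hne2 _ h2


set_option maxHeartbeats 1000000 in
lemma simpleT (lam : ℝ) (hlam : Irrational (lam / (2 * Real.pi))) (β : ℝ) (p q : ℤ)
    (hpq : Int.gcd p q = 1) (W : Submodule ℂ (ℤ →₀ ℂ))
    (hU : Submodule.map (Uop lam β p q) W = W)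
    (hV : Submodule.map (Vop lam β p q) W = W) :
    W = ⊥ ∨ W = ⊤ := by
  by_cases hbot : W = ⊥
  · exact Or.inl hbot
  right
  -- notation for the U-coefficient
  set cU : ℤ → ℂ := fun n => if p = 0 then 1 else
      Complex.exp (Complex.I * ((β + lam * n + lam * q * ((p : ℝ) + 1) / 2) / (p : ℝ)))
    with hcU_def
  have hUw : Uop lam β p q = wop (fun n => n + q) cU := Uop_eq lam β p q
  rw [hUw] at hU
  have hcU : ∀ n, cU n ≠ 0 := by
    intro n; rw [hcU_def]; dsimp only
    split
    · exact one_ne_zero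
    · exact Complex.exp_ne_zero _
  -- inverse of U
  set Uinv : (ℤ →₀ ℂ) →ₗ[ℂ] (ℤ →₀ ℂ) := wop (fun n => n - q) (fun n => (cU (n - q))⁻¹)
    with hUinv_def
  have hUinvU : Uinv ∘ₗ wop (fun n => n + q) cU = LinearMap.id := by
    rw [hUinv_def, wop_comp]
    rw [show (fun n : ℤ => n + q - q) = fun n : ℤ => n by funext n; ring]
    rw [show (fun n => cU n * (cU (n + q - q))⁻¹) = fun _ : ℤ => (1 : ℂ) by
      funext n; rw [add_sub_cancel_right, mul_inv_cancel₀ (hcU n)]]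
    exact wop_id
  have hUinvW : Submodule.map Uinv W = W := map_eq_of_comp_id hUinvU W hU
  -- the predicate `Q`
  set Q : ℤ → Prop := fun m => ∃ c : ℂ, c ≠ 0 ∧ Finsupp.single m c ∈ W with hQ_def
  have hstep : ∀ (σ : ℤ → ℤ) (w : ℤ → ℂ), (∀ n, w n ≠ 0) →
      Submodule.map (wop σ w) W = W → ∀ m, Q m → Q (σ m) := by
    intro σ w hw hmap m ⟨c, hc, hcW⟩
    refine ⟨c * w m, mul_ne_zero hc (hw m), ?_⟩
    have h1 : wop σ w (Finsupp.single m c) ∈ Submodule.map (wop σ w) W :=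
      Submodule.mem_map_of_mem hcW
    rw [hmap, wop_single] at h1
    exact h1
  have hQq : ∀ m, Q m → Q (m + q) := hstep _ _ hcU hU
  have hQmq : ∀ m, Q m → Q (m - q) := by
    have := hstep _ _ (fun n => inv_ne_zero (hcU (n - q))) hUinvW
    exact this
  have hQmp : ∀ m, Q m → Q (m - p) := by
    by_cases hp : p = 0
    · subst hp; intro m hm; simpa using hm
    · rw [Vop_eq lam β q hp] at hV
      exact hstep _ _ (fun _ => one_ne_zero) hV
  have hQpp : ∀ m, Q m → Q (m + p) := by
    by_cases hp : p = 0
    · subst hp; intro m hm; simpa using hm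
    · rw [Vop_eq lam β q hp] at hV
      have hVinvV : wop (fun n => n + p) (fun _ => (1:ℂ)) ∘ₗ wop (fun n => n - p) (fun _ => (1:ℂ))
          = LinearMap.id := by
        rw [wop_comp]
        rw [show (fun n : ℤ => n - p + p) = fun n : ℤ => n by funext n; ring]
        rw [show (fun n : ℤ => (1:ℂ) * 1) = fun _ : ℤ => (1 : ℂ) by funext n; ring]
        exact wop_id
      have hVinvW := map_eq_of_comp_id hVinvV W hV
      exact hstep _ _ (fun _ => one_ne_zero) hVinvW
  -- closure of Q under arbitrary translations
  have hclosp : ∀ m, Q m → ∀ a : ℤ, Q (m + a * p) := by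
    intro m hm a
    induction a using Int.induction_on with
    | zero => simpa using hm
    | succ a ih =>
      have h := hQpp _ ih
      rw [show m + ((a : ℤ) + 1) * p = m + (a : ℤ) * p + p by ring]
      exact h
    | pred a ih =>
      have h := hQmp _ ih
      rw [show m + (-(a : ℤ) - 1) * p = m + (-(a : ℤ)) * p - p by ring]
      exact h
  have hclosq : ∀ m, Q m → ∀ b : ℤ, Q (m + b * q) := by
    intro m hm b
    induction b using Int.induction_on with
    | zero => simpa using hm
    | succ b ih =>
      have h := hQq _ ih
      rw [show m + ((b : ℤ) + 1) * q = m + (b : ℤ) * q + q by ring]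
      exact h
    | pred b ih =>
      have h := hQmq _ ih
      rw [show m + (-(b : ℤ) - 1) * q = m + (-(b : ℤ)) * q - q by ring]
      exact h
  have hclos : ∀ m, Q m → ∀ m' : ℤ, Q m' := by
    intro m hm m'
    obtain ⟨u, v, huv⟩ := Int.isCoprime_iff_gcd_eq_one.mpr hpq
    have h1 := hclosq _ (hclosp _ hm ((m' - m) * u)) ((m' - m) * v)
    rw [show m + (m' - m) * u * p + (m' - m) * v * q = m' by linear_combination (m' - m) * huv]
      at h1
    exact h1
  -- find a starting point for Q using a diagonal operator
  have hUorig : Submodule.map (Uop lam β p q) W = W := by rw [hUw]; exact hU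
  have hdiag := diagT lam hlam β p q hpq W hUorig hV
  obtain ⟨D, μ, hDW, hDd, hμ⟩ := hdiag
  obtain ⟨w, hwW, hw0⟩ := Submodule.exists_mem_ne_zero_of_ne_bot hbot
  obtain ⟨n, hn⟩ := Finsupp.support_nonempty_iff.mpr hw0
  have hwn : w n ≠ 0 := Finsupp.mem_support_iff.mp hn
  have hQn : Q n := ⟨w n, hwn, diag_extract D μ hDd hμ W hDW w hwW n⟩
  -- conclude W = ⊤
  rw [eq_top_iff]
  rintro x -
  induction x using Finsupp.induction_linear with
  | zero => exact W.zero_mem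
  | add f g hf hg => exact W.add_mem hf hg
  | single i c =>
    obtain ⟨c₀, hc₀, hc₀W⟩ := hclos n hQn i
    have := W.smul_mem (c * c₀⁻¹) hc₀W
    rwa [Finsupp.smul_single, smul_eq_mul, mul_assoc, inv_mul_cancel₀ hc₀, mul_one] at this

lemma phase_id {K : Type*} [Field K] (lam α dd pp' qq' mm ll cc : K)
    (hd : dd ≠ 0) (hp' : pp' ≠ 0) (hc : cc = dd * (qq' * pp' * (dd - 1)) / 2) :
    (α + lam * (dd * mm + ll - cc) + lam * (dd * qq') * ((dd * pp') + 1) / 2) / (dd * pp')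
      = ((α + lam * ll) / dd + lam * mm + lam * qq' * (pp' + 1) / 2) / pp' := by
  subst hc
  field_simp
  ring

set_option maxHeartbeats 1600000 in
/-- If `gcd(p,q) = d > 1` then `T^α_{pq}` decomposes as a direct sum of `d`
simple right `A`-modules: `T^α_{pq} ≅ ⊕_{l=0}^{d-1} T^{(α+λl)/d}_{p/d,q/d}`.
The isomorphism is a linear equivalence intertwining the generator actions
blockwise; simplicity of a summand means that every subspace invariant (with
equality, i.e. also under the inverse actions) under both generator actions is
trivial. -/
theorem Tmodule_decomposition (lam : ℝ) (hlam : Irrational (lam / (2 * Real.pi)))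
    (α : ℝ) (p q : ℤ) (d : ℕ) (hd : d = Int.gcd p q) (hd1 : 1 < d) :
    (∃ Φ : (ℤ →₀ ℂ) ≃ₗ[ℂ] (Fin d → (ℤ →₀ ℂ)),
      (∀ x (l : Fin d),
        Φ (Uop lam α p q x) l =
          Uop lam ((α + lam * (l : ℕ)) / (d : ℝ)) (p / (d : ℤ)) (q / (d : ℤ)) (Φ x l)) ∧
      (∀ x (l : Fin d),
        Φ (Vop lam α p q x) l =
          Vop lam ((α + lam * (l : ℕ)) / (d : ℝ)) (p / (d : ℤ)) (q / (d : ℤ)) (Φ x l))) ∧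
    (∀ l : Fin d, ∀ W : Submodule ℂ (ℤ →₀ ℂ),
      Submodule.map (Uop lam ((α + lam * (l : ℕ)) / (d : ℝ)) (p / (d : ℤ)) (q / (d : ℤ))) W = W →
      Submodule.map (Vop lam ((α + lam * (l : ℕ)) / (d : ℝ)) (p / (d : ℤ)) (q / (d : ℤ))) W = W →
      W = ⊥ ∨ W = ⊤) := by
  have hd0 : 0 < d := by omega
  haveI : NeZero d := ⟨by omega⟩
  have hdZ : ((d : ℤ)) ≠ 0 := by exact_mod_cast hd0.ne'
  have hgcd : Int.gcd (p / (d : ℤ)) (q / (d : ℤ)) = 1 := by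
    rw [hd]
    exact Int.gcd_div_gcd_div_gcd (by omega)
  have hdp : (d : ℤ) ∣ p := by rw [hd]; exact Int.gcd_dvd_left p q
  have hdq : (d : ℤ) ∣ q := by rw [hd]; exact Int.gcd_dvd_right p q
  set p' := p / (d : ℤ) with hp'def
  set q' := q / (d : ℤ) with hq'def
  have hpp : p = d * p' := (Int.mul_ediv_cancel' hdp).symm
  have hqq : q = d * q' := (Int.mul_ediv_cancel' hdq).symm
  have hev : (2 : ℤ) ∣ (d : ℤ) * (q' * p' * ((d : ℤ) - 1)) := by
    have h1 : Even ((((d : ℤ) - 1)) * (((d : ℤ) - 1) + 1)) := Int.even_mul_succ_self _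
    rw [sub_add_cancel] at h1
    have h2 := h1.mul_left (q' * p')
    have heq : (d : ℤ) * (q' * p' * ((d : ℤ) - 1)) = q' * p' * (((d : ℤ) - 1) * d) := by ring
    rw [heq]
    exact h2.two_dvd
  set c : ℤ := (d : ℤ) * (q' * p' * ((d : ℤ) - 1)) / 2 with hcdef
  have h2c : 2 * c = (d : ℤ) * (q' * p' * ((d : ℤ) - 1)) := Int.mul_ediv_cancel' hev
  -- p = 0 iff p' = 0
  have hp0iff : p = 0 ↔ p' = 0 := by
    constructor
    · intro h; rw [hp'def, h]; exact Int.zero_ediv _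
    · intro h; rw [hpp, h, mul_zero]
  -- the reindexing bijection
  set σ : ℤ ≃ (Fin d × ℤ) :=
    ((Equiv.addRight c).trans (Int.divModEquiv d)).trans (Equiv.prodComm ℤ (Fin d)) with hσdef
  have hσsymm : ∀ (l : Fin d) (m : ℤ), σ.symm (l, m) = (d : ℤ) * m + (l : ℤ) - c := by
    intro l m
    rw [hσdef]
    simp [Int.divModEquiv, Equiv.addRight]
    ring
  have hn_eq : ∀ n : ℤ, n = (d : ℤ) * (σ n).2 + ((σ n).1 : ℤ) - c := by
    intro n
    have h1 := hσsymm (σ n).1 (σ n).2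
    rw [Prod.mk.eta, Equiv.symm_apply_apply] at h1
    exact h1
  have hσ_apply : ∀ (l : Fin d) (m : ℤ), σ ((d : ℤ) * m + (l : ℤ) - c) = (l, m) := by
    intro l m
    rw [← hσsymm]
    exact σ.apply_symm_apply _
  -- the linear equivalence
  set Φ : (ℤ →₀ ℂ) ≃ₗ[ℂ] (Fin d → (ℤ →₀ ℂ)) :=
    (Finsupp.domLCongr σ : (ℤ →₀ ℂ) ≃ₗ[ℂ] (Fin d × ℤ →₀ ℂ)).trans
      ((Finsupp.finsuppProdLEquiv ℂ).trans
        (Finsupp.linearEquivFunOnFinite ℂ (ℤ →₀ ℂ) (Fin d))) with hΦdef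
  have hprod_single : ∀ (x : Fin d) (y : ℤ) (a : ℂ),
      Finsupp.finsuppProdLEquiv ℂ (Finsupp.single ((x, y) : Fin d × ℤ) a)
        = Finsupp.single x (Finsupp.single y a) := by
    intro x y a
    ext i j
    show Finsupp.single ((x, y) : Fin d × ℤ) a (i, j) = Finsupp.single x (Finsupp.single y a) i j
    rcases eq_or_ne x i with rfl | hx
    · rw [Finsupp.single_eq_same]
      rcases eq_or_ne y j with rfl | hy
      · rw [Finsupp.single_eq_same, Finsupp.single_eq_same]
      · rw [Finsupp.single_eq_of_ne hy.symm,
          Finsupp.single_eq_of_ne (by simp [Prod.ext_iff, hy.symm] : ((x, j) : Fin d × ℤ) ≠ (x, y))]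
    · rw [Finsupp.single_eq_of_ne hx.symm,
        Finsupp.single_eq_of_ne (by simp [Prod.ext_iff, hx.symm] : ((i, j) : Fin d × ℤ) ≠ (x, y)),
        Finsupp.coe_zero, Pi.zero_apply]
  have hPhi : ∀ (n : ℤ) (a : ℂ) (l : Fin d),
      Φ (Finsupp.single n a) l
        = if (σ n).1 = l then Finsupp.single (σ n).2 a else 0 := by
    intro n a l
    rw [hΦdef]
    simp only [LinearEquiv.trans_apply, Finsupp.domLCongr_apply, Finsupp.domCongr_apply,
      Finsupp.equivMapDomain_single]
    rw [show σ n = ((σ n).1, (σ n).2) from rfl, hprod_single,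
      Finsupp.linearEquivFunOnFinite_single]
    rcases eq_or_ne (σ n).1 l with rfl | hl
    · rw [if_pos rfl, Pi.single_eq_same]
    · rw [if_neg hl, Pi.single_eq_of_ne (Ne.symm hl)]
  -- index shift identities
  have hshiftU : ∀ n : ℤ, σ (n + q) = ((σ n).1, (σ n).2 + q') := by
    intro n
    have h1 := hn_eq n
    rw [show n + q = (d : ℤ) * ((σ n).2 + q') + (((σ n).1 : ℕ) : ℤ) - c by
      rw [hqq]; linear_combination h1]
    exact hσ_apply _ _
  have hshiftV : ∀ n : ℤ, σ (n - p) = ((σ n).1, (σ n).2 - p') := by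
    intro n
    have h1 := hn_eq n
    rw [show n - p = (d : ℤ) * ((σ n).2 - p') + (((σ n).1 : ℕ) : ℤ) - c by
      rw [hpp]; linear_combination h1]
    exact hσ_apply _ _
  have hdC : ((d : ℕ) : ℂ) ≠ 0 := by exact_mod_cast hdZ
  -- the U intertwining
  have hUint : ∀ x (l : Fin d),
      Φ (Uop lam α p q x) l
        = Uop lam ((α + lam * (l : ℕ)) / (d : ℝ)) p' q' (Φ x l) := by
    intro x l
    induction x using Finsupp.induction_linear with
    | zero => simp only [map_zero, Pi.zero_apply]
    | add f g hf hg =>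
      simp only [map_add, Pi.add_apply]
      rw [hf, hg]
    | single n a =>
      rw [Uop_eq lam α p q, wop_single, hPhi, hPhi, hshiftU]
      dsimp only
      rcases eq_or_ne (σ n).1 l with heq | hne
      · rw [if_pos heq, if_pos heq, Uop_eq, wop_single]
        congr 1
        congr 1
        by_cases hp0 : p = 0
        · rw [if_pos hp0, if_pos (hp0iff.mp hp0)]
        · have hp'0 : p' ≠ 0 := fun h => hp0 (hp0iff.mpr h)
          rw [if_neg hp0, if_neg hp'0]
          have hnC : (n : ℂ) = (d : ℂ) * ((σ n).2 : ℂ) + ((l : ℕ) : ℂ) - (c : ℂ) := by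
            have h1 := hn_eq n; rw [heq] at h1; exact_mod_cast h1
          have hpC : (p : ℂ) = (d : ℂ) * (p' : ℂ) := by exact_mod_cast hpp
          have hqC : (q : ℂ) = (d : ℂ) * (q' : ℂ) := by exact_mod_cast hqq
          have hcC : (c : ℂ) = (d : ℂ) * ((q' : ℂ) * (p' : ℂ) * ((d : ℂ) - 1)) / 2 := by
            have h3 : (2 : ℂ) * (c : ℂ) = (d : ℂ) * ((q' : ℂ) * (p' : ℂ) * ((d : ℂ) - 1)) := by
              exact_mod_cast h2c
            field_simp
            linear_combination h3
          have hp'C : (p' : ℂ) ≠ 0 := Int.cast_ne_zero.mpr hp'0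
          congr 1
          push_cast
          rw [hnC, hpC, hqC, hcC]
          field_simp
          ring
      · rw [if_neg hne, if_neg hne, map_zero]
  -- the V intertwining
  have hVint : ∀ x (l : Fin d),
      Φ (Vop lam α p q x) l
        = Vop lam ((α + lam * (l : ℕ)) / (d : ℝ)) p' q' (Φ x l) := by
    by_cases hp0 : p = 0
    · -- diagonal case
      have hp'0 : p' = 0 := hp0iff.mp hp0
      have hq0 : q ≠ 0 := by
        intro h
        rw [hd, hp0, h] at hd1
        simp [Int.gcd] at hd1
      have hq'0 : q' ≠ 0 := fun h => hq0 (by rw [hqq, h, mul_zero])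
      have hc0 : c = 0 := by rw [hcdef, hp'0]; simp
      intro x l
      induction x using Finsupp.induction_linear with
      | zero => simp only [map_zero, Pi.zero_apply]
      | add f g hf hg =>
        simp only [map_add, Pi.add_apply]
        rw [hf, hg]
      | single n a =>
        rw [hp0, Vop_eq_zero lam α q, wop_single, hPhi, hPhi, hp'0, Vop_eq_zero]
        rcases eq_or_ne (σ n).1 l with heq | hne
        · rw [if_pos heq, if_pos heq, wop_single]
          congr 1
          congr 1
          have hnC : (n : ℂ) = (d : ℂ) * ((σ n).2 : ℂ) + ((l : ℕ) : ℂ) := by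
            have h1 := hn_eq n; rw [heq, hc0] at h1
            have h2 : n = (d : ℤ) * (σ n).2 + ((l : ℕ) : ℤ) := by linear_combination h1
            exact_mod_cast h2
          have hqC : (q : ℂ) = (d : ℂ) * (q' : ℂ) := by exact_mod_cast hqq
          have hq'C : (q' : ℂ) ≠ 0 := Int.cast_ne_zero.mpr hq'0
          congr 1
          push_cast
          rw [hnC, hqC]
          field_simp
          ring
        · rw [if_neg hne, if_neg hne, map_zero]
    · -- shift case
      have hp'0 : p' ≠ 0 := fun h => hp0 (hp0iff.mpr h)
      intro x l
      induction x using Finsupp.induction_linear with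
      | zero => simp only [map_zero, Pi.zero_apply]
      | add f g hf hg =>
        simp only [map_add, Pi.add_apply]
        rw [hf, hg]
      | single n a =>
        rw [Vop_eq lam α q hp0, wop_single, mul_one, hPhi, hPhi, hshiftV,
          Vop_eq lam ((α + lam * (l : ℕ)) / (d : ℝ)) q' hp'0]
        dsimp only
        rcases eq_or_ne (σ n).1 l with heq | hne
        · rw [if_pos heq, if_pos heq, wop_single, mul_one]
        · rw [if_neg hne, if_neg hne, map_zero]
  refine ⟨⟨Φ, hUint, hVint⟩, ?_⟩
  intro l W hWU hWV
  exact simpleT lam hlam _ p' q' hgcd W hWU hWV
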